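/- For any x ∈ ℝⁿ, if x̃ is obtained by sorting the components of x in decreasing order of magnitude (|x̃₁| ≥ |x̃₂| ≥ … ≥ |x̃ₙ|), then the OSCAR regularizer satisfies r(x) = Σᵢ wᵢ|x̃ᵢ| where wᵢ = λ₁ + λ₂(n − i). -/

import Mathlib

open Finset

/-! Sorting is a permutation, and both ‖x‖₁ and the symmetric pair sum `∑_{i<j} max{|xᵢ|,|xⱼ|}`
(half the sum over all ordered pairs `i ≠ j`) are invariant under permutations. Once the absolute
values are sorted, `max{|x̃ᵢ|,|x̃ⱼ|} = |x̃ᵢ|` for `i < j`, so `|x̃ᵢ|` is counted once for each of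
the `n - i` indices after it. -/

/-- The OSCAR regularizer r(x) = λ₁‖x‖₁ + λ₂ ∑_{i<j} max{|xᵢ|,|xⱼ|} on ℝⁿ. -/
noncomputable def oscar (n : ℕ) (l1 l2 : ℝ) (x : Fin n → ℝ) : ℝ :=
  l1 * ∑ i, |x i| +
  l2 * ∑ p ∈ Finset.univ.filter (fun p : Fin n × Fin n => p.1 < p.2), max |x p.1| |x p.2|

section PairSums

variable {ι M : Type*} [Fintype ι] [LinearOrder ι]

lemma sum_filter_ne_eq_two_nsmul_sum_filter_lt [AddCommMonoid M] (g : ι → ι → M)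
    (hg : ∀ i j, g i j = g j i) :
    ∑ p ∈ univ.filter (fun p : ι × ι => p.1 ≠ p.2), g p.1 p.2
      = 2 • ∑ p ∈ univ.filter (fun p : ι × ι => p.1 < p.2), g p.1 p.2 := by
  have hsplit : ∀ p : ι × ι, (if p.1 ≠ p.2 then g p.1 p.2 else 0)
      = (if p.1 < p.2 then g p.1 p.2 else 0) + (if p.2 < p.1 then g p.2 p.1 else 0) := by
    rintro ⟨i, j⟩
    rcases lt_trichotomy i j with hij | rfl | hij
    · simp [hij.ne, lt_asymm hij, hij.not_ge]
    · simp
    · simp [hij.ne', lt_asymm hij, hij.not_ge, hg i j]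
  have hswap : ∑ p : ι × ι, (if p.2 < p.1 then g p.2 p.1 else 0)
      = ∑ p : ι × ι, (if p.1 < p.2 then g p.1 p.2 else 0) :=
    Fintype.sum_equiv (Equiv.prodComm ι ι) _ _ fun _ => rfl
  rw [sum_filter, sum_filter, Fintype.sum_congr _ _ hsplit, sum_add_distrib, hswap, two_nsmul]

lemma sum_filter_lt_comp_perm [AddCommMonoid M] [IsAddTorsionFree M] (g : ι → ι → M)
    (hg : ∀ i j, g i j = g j i) (σ : Equiv.Perm ι) :
    ∑ p ∈ univ.filter (fun p : ι × ι => p.1 < p.2), g (σ p.1) (σ p.2)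
      = ∑ p ∈ univ.filter (fun p : ι × ι => p.1 < p.2), g p.1 p.2 := by
  refine nsmul_right_injective two_ne_zero ?_
  simp only
  rw [← sum_filter_ne_eq_two_nsmul_sum_filter_lt _ fun i j => hg (σ i) (σ j),
    ← sum_filter_ne_eq_two_nsmul_sum_filter_lt g hg, sum_filter, sum_filter]
  exact Fintype.sum_equiv (σ.prodCongr σ) _ _ fun _ => by simp

lemma sum_filter_lt_fst [LocallyFiniteOrderTop ι] [AddCommMonoid M] (f : ι → M) :
    ∑ p ∈ univ.filter (fun p : ι × ι => p.1 < p.2), f p.1 = ∑ i, #(Ioi i) • f i := by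
  rw [sum_filter, Fintype.sum_prod_type]
  refine sum_congr rfl fun i _ => ?_
  dsimp only
  rw [← sum_filter, sum_const]
  congr
  ext j
  simp

lemma sum_filter_lt_max_of_antitone [LinearOrder M] [AddCommMonoid M] {y : ι → M}
    (hy : Antitone y) :
    ∑ p ∈ univ.filter (fun p : ι × ι => p.1 < p.2), max (y p.1) (y p.2)
      = ∑ p ∈ univ.filter (fun p : ι × ι => p.1 < p.2), y p.1 :=
  sum_congr rfl fun _ hp => max_eq_left (hy (mem_filter.1 hp).2.le)

end PairSums

lemma Fin.sum_filter_lt_fst_eq_sum_mul {R : Type*} [Ring R] {n : ℕ} (f : Fin n → R) :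
    ∑ p ∈ univ.filter (fun p : Fin n × Fin n => p.1 < p.2), f p.1
      = ∑ i : Fin n, ((n : R) - 1 - (i : ℕ)) * f i := by
  rw [sum_filter_lt_fst]
  refine sum_congr rfl fun i _ => ?_
  have hi := i.isLt
  rw [Fin.card_Ioi, nsmul_eq_mul, Nat.cast_sub (by omega), Nat.cast_sub (by omega), Nat.cast_one]

theorem oscar_eq_weighted_sorted_l1_general (n : ℕ) (l1 l2 : ℝ)
    (x : Fin n → ℝ) (σ : Equiv.Perm (Fin n))
    (hsorted : ∀ i j : Fin n, i ≤ j → |x (σ j)| ≤ |x (σ i)|) :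
    oscar n l1 l2 x = ∑ i : Fin n, (l1 + l2 * ((n : ℝ) - 1 - (i : ℕ))) * |x (σ i)| := by
  have hl1 : ∑ i, |x i| = ∑ i, |x (σ i)| := (Equiv.sum_comp σ _).symm
  have hpairs := sum_filter_lt_comp_perm (fun i j => max |x i| |x j|) (fun _ _ => max_comm _ _) σ
  rw [oscar, hl1, ← hpairs, sum_filter_lt_max_of_antitone (y := fun i => |x (σ i)|) hsorted,
    Fin.sum_filter_lt_fst_eq_sum_mul fun i => |x (σ i)|, mul_sum, mul_sum, ← sum_add_distrib]
  exact sum_congr rfl fun i _ => by ring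

/-- OSCAR equals a weighted sorted ℓ₁ norm with weights wᵢ = λ₁ + λ₂(n − i) (1-indexed). -/
theorem oscar_eq_weighted_sorted_l1 (n : ℕ) (l1 l2 : ℝ) (h1 : 0 ≤ l1) (h2 : 0 ≤ l2)
    (x : Fin n → ℝ) (σ : Equiv.Perm (Fin n))
    (hsorted : ∀ i j : Fin n, i ≤ j → |x (σ j)| ≤ |x (σ i)|) :
    oscar n l1 l2 x = ∑ i : Fin n, (l1 + l2 * ((n : ℝ) - 1 - (i : ℕ))) * |x (σ i)| :=
  oscar_eq_weighted_sorted_l1_general n l1 l2 x σ hsorted
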